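/- The 0-1 coefficient matrix of the system of equality constraints (2)–(5) defining the polytope P(G^p) is totally unimodular. -/
import Mathlib


/-- The coefficient matrix of the equality-constraint system defining the
polytope `P(G^p)` of the paired vertex graph with `m = n/2` pairs.
Columns: the edge `(k, b, b')` joining vertex `b` of pair `V^{k+1}` to vertex
`b'` of pair `V^{k+2}` (for `k : Fin (m-1)`), plus the two end edges (indexed by
`Bool`).  Rows: for each vertex `v = (k+1, b)` with `k : Fin (m-1)`, the
constraint `x_{u_1,v} + x_{u_2,v} = 1` with `u_1, u_2` the pair preceding `v`
(first summand), for each vertex `v = (k, b)` the constraint with `u_1, u_2`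
the pair following `v` (second summand), and the two constraints `x_e = 1` for
the end edges (third summand). -/
def pvConstraintMatrix (m : ℕ) :
    Matrix ((Fin (m - 1) × Bool) ⊕ ((Fin (m - 1) × Bool) ⊕ Bool))
      ((Fin (m - 1) × Bool × Bool) ⊕ Bool) ℤ :=
  fun r c =>
    match r, c with
    | Sum.inl (k, b), Sum.inl (k', _, b2) => if k' = k ∧ b2 = b then 1 else 0
    | Sum.inr (Sum.inl (k, b)), Sum.inl (k', b1, _) => if k' = k ∧ b1 = b then 1 else 0
    | Sum.inr (Sum.inr e), Sum.inr e' => if e = e' then 1 else 0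
    | _, _ => 0

open Matrix in
/-- A 0-1 matrix whose rows are split into two blocks such that every column
has at most one `1` in each block is totally unimodular. -/
lemma bipartite_isTotallyUnimodular {α β γ : Type*} (A : Matrix (α ⊕ β) γ ℤ)
    (h01 : ∀ i j, A i j = 0 ∨ A i j = 1)
    (hl : ∀ j a a', A (Sum.inl a) j ≠ 0 → A (Sum.inl a') j ≠ 0 → a = a')
    (hr : ∀ j b b', A (Sum.inr b) j ≠ 0 → A (Sum.inr b') j ≠ 0 → b = b') :
    A.IsTotallyUnimodular := by
  intro k
  induction k with
  | zero => intro f g _ _; exact ⟨1, by simp⟩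
  | succ k ih =>
    intro f g hf hg
    set S := A.submatrix f g with hSdef
    by_cases hcol0 : ∃ j, ∀ i, S i j = 0
    · obtain ⟨j, hj⟩ := hcol0
      exact ⟨0, by rw [SignType.coe_zero]; exact (det_eq_zero_of_column_eq_zero j hj).symm⟩
    by_cases hcol1 : ∃ j i, S i j ≠ 0 ∧ ∀ i', i' ≠ i → S i' j = 0
    · obtain ⟨j, i, hij, huniq⟩ := hcol1
      have hmem : (S.submatrix i.succAbove j.succAbove).det ∈ Set.range SignType.cast := by
        rw [hSdef, submatrix_submatrix]
        exact ih _ _ (hf.comp (Fin.succAbove_right_injective))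
          (hg.comp (Fin.succAbove_right_injective))
      have hone : S i j = 1 := (h01 (f i) (g j)).resolve_left hij
      have hdet : S.det = (-1) ^ (i + j : ℕ) * S i j * (S.submatrix i.succAbove j.succAbove).det := by
        rw [det_succ_column S j, Finset.sum_eq_single i]
        · intro i' _ hi'
          rw [huniq i' hi', mul_zero, zero_mul]
        · intro h; exact absurd (Finset.mem_univ i) h
      rw [hdet, hone, mul_one]
      obtain ⟨s, hs⟩ := hmem
      rcases Nat.even_or_odd (i + j : ℕ) with he | ho
      · rw [he.neg_one_pow, one_mul]; exact ⟨s, hs⟩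
      · rw [ho.neg_one_pow, neg_one_mul]
        exact ⟨-s, by rw [← hs]; simp⟩
    · -- every column has at least two nonzero entries
      push_neg at hcol0 hcol1
      refine ⟨0, ?_⟩
      rw [SignType.coe_zero, eq_comm, ← Matrix.exists_vecMul_eq_zero_iff]
      refine ⟨fun i => if (f i).isLeft then 1 else -1, ?_, ?_⟩
      · intro hv
        have h0 := congrFun hv 0
        simp only [Pi.zero_apply] at h0
        split at h0 <;> omega
      · funext j
        obtain ⟨i₁, h1⟩ := hcol0 j
        obtain ⟨i₂, hne, h2⟩ := hcol1 j i₁ h1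
        -- find the `inl` witness `p` and the `inr` witness `q`
        have hSA : ∀ i, S i j = A (f i) (g j) := fun i => rfl
        obtain ⟨p, q, hpq, a, ha, b, hb, hp, hq⟩ :
            ∃ p q, p ≠ q ∧ ∃ a, f p = Sum.inl a ∧ ∃ b, f q = Sum.inr b ∧
              S p j ≠ 0 ∧ S q j ≠ 0 := by
          rcases hf1 : f i₁ with a₁ | b₁ <;> rcases hf2 : f i₂ with a₂ | b₂
          · exfalso
            have := hl (g j) a₁ a₂ (by rw [← hf1, ← hSA]; exact h1)
              (by rw [← hf2, ← hSA]; exact h2)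
            exact hne (hf (by rw [hf1, hf2, this]))
          · exact ⟨i₁, i₂, fun h => hne h.symm, a₁, hf1, b₂, hf2, h1, h2⟩
          · exact ⟨i₂, i₁, hne, a₂, hf2, b₁, hf1, h2, h1⟩
          · exfalso
            have := hr (g j) b₁ b₂ (by rw [← hf1, ← hSA]; exact h1)
              (by rw [← hf2, ← hSA]; exact h2)
            exact hne (hf (by rw [hf1, hf2, this]))
        have key : ∀ i, S i j ≠ 0 → i = p ∨ i = q := by
          intro i hi
          rcases hfi : f i with a' | b'
          · left
            apply hf
            rw [hfi, ha]
            exact congrArg Sum.inl (hl (g j) a' a (by rw [← hfi, ← hSA]; exact hi)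
              (by rw [← ha, ← hSA]; exact hp))
          · right
            apply hf
            rw [hfi, hb]
            exact congrArg Sum.inr (hr (g j) b' b (by rw [← hfi, ← hSA]; exact hi)
              (by rw [← hb, ← hSA]; exact hq))
        have hsum : ∀ i, i ∈ Finset.univ → i ∉ ({p, q} : Finset (Fin (k+1))) →
            (if (f i).isLeft then (1:ℤ) else -1) * S i j = 0 := by
          intro i _ hi
          simp only [Finset.mem_insert, Finset.mem_singleton, not_or] at hi
          have : S i j = 0 := by
            by_contra h
            rcases key i h with rfl | rfl
            · exact hi.1 rfl
            · exact hi.2 rfl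
          rw [this, mul_zero]
        have hSp : S p j = 1 := (h01 (f p) (g j)).resolve_left hp
        have hSq : S q j = 1 := (h01 (f q) (g j)).resolve_left hq
        have hTwo : (∑ i, (if (f i).isLeft then (1:ℤ) else -1) * S i j) =
            ∑ i ∈ ({p, q} : Finset (Fin (k+1))), (if (f i).isLeft then (1:ℤ) else -1) * S i j :=
          (Finset.sum_subset (Finset.subset_univ _) hsum).symm
        show (∑ i, (if (f i).isLeft then (1:ℤ) else -1) * S i j) = 0
        rw [hTwo, Finset.sum_pair hpq, hSp, hSq, ha, hb]
        simp

/-- The 0-1 coefficient matrix of the system of equality constraints defining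
the polytope `P(G^p)` is totally unimodular. -/
theorem pvConstraintMatrix_isTotallyUnimodular (m : ℕ) :
    (pvConstraintMatrix m).IsTotallyUnimodular := by
  apply bipartite_isTotallyUnimodular
  · rintro (⟨k, b⟩ | (⟨k, b⟩ | e)) (⟨k', b1, b2⟩ | e') <;>
      simp only [pvConstraintMatrix] <;> first | (split <;> simp) | simp
  · rintro (⟨k', b1, b2⟩ | e') ⟨k, b⟩ ⟨k2, b2'⟩ h h'
    · simp only [pvConstraintMatrix, ne_eq, ite_eq_right_iff, not_forall] at h h'
      obtain ⟨⟨rfl, rfl⟩, -⟩ := h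
      obtain ⟨⟨h1, h2⟩, -⟩ := h'
      simp [h1, h2]
    · exact absurd rfl h
  · rintro (⟨k', b1, b2⟩ | e') (⟨k, b⟩ | e) (⟨k2, b2'⟩ | e2) h h'
    · simp only [pvConstraintMatrix, ne_eq, ite_eq_right_iff, not_forall] at h h'
      obtain ⟨⟨rfl, rfl⟩, -⟩ := h
      obtain ⟨⟨h1, h2⟩, -⟩ := h'
      simp [h1, h2]
    · exact absurd rfl h'
    · exact absurd rfl h
    · exact absurd rfl h
    · exact absurd rfl h
    · exact absurd rfl h
    · exact absurd rfl h'
    · simp only [pvConstraintMatrix, ne_eq, ite_eq_right_iff, not_forall] at h h'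
      obtain ⟨h1, -⟩ := h
      obtain ⟨h2, -⟩ := h'
      rw [h1, h2]
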